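/- There exists a family τ = (τ_p)_p with each τ_p ∈ ℤ (viewed in ℤ_p) such that in the ring R_τ = {f ∈ ℚ[x] : ∀ p, f(τ_p) ∈ ℤ_p}, every element of R_τ \ ℤ is divisible by infinitely many prime numbers; in particular, the prime elements of R_τ are exactly (up to sign) the prime numbers. -/

import Mathlib

open Polynomial

noncomputable def Rtau (τ : (p : ℕ) → [Fact p.Prime] → ℤ_[p]) : Subring (Polynomial ℚ) :=
  ⨅ (p : ℕ) (hp : Fact p.Prime),
    Subring.comap (Polynomial.aeval ((τ p : ℤ_[p]) : ℚ_[p]) : Polynomial ℚ →ₐ[ℚ] ℚ_[p]).toRingHom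
      (PadicInt.Coe.ringHom (p := p)).range

/-!
By Schur's theorem every nonconstant `f ∈ ℚ[X]` has an integral root modulo `p` (in the sense
`|f(z)|_p < 1`) for infinitely many primes `p`. Since `ℚ[X]` is countable, the primes can be
distributed among the nonconstant polynomials so that each receives infinitely many of its own,
and `τ_p` is taken to be such a root of the polynomial that `p` was assigned to.

In `R_τ` a prime `q` divides `f` exactly when `|f(τ_q)|_q < 1`, since dividing by `q` only affects
the `q`-adic condition. Hence every nonconstant element has infinitely many prime divisors `q` and
is not irreducible, while the constants of `R_τ` are the integers and its units are `±1`.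
-/

instance Polynomial.instCountable {R : Type*} [Semiring R] [Countable R] : Countable R[X] :=
  (AddMonoidAlgebra.coeff_injective.comp toFinsupp_injective).countable

theorem exists_strictMono_forall_mem {A : ℕ → Set ℕ} (hA : ∀ k, (A k).Infinite) :
    ∃ a : ℕ → ℕ, StrictMono a ∧ ∀ k, a k ∈ A k := by
  choose next hnext_mem hnext_gt using fun k m => (hA k).exists_gt m
  let a : ℕ → ℕ := fun k => Nat.rec (next 0 0) (fun k ak => next (k + 1) ak) k
  refine ⟨a, strictMono_nat_of_lt_succ fun k => hnext_gt _ _, fun k => ?_⟩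
  cases k <;> apply hnext_mem

theorem exists_forall_infinite_setOf_mem_and_eq {ι : Type*} [Countable ι] [Nonempty ι]
    {A : ι → Set ℕ} (hA : ∀ i, (A i).Infinite) :
    ∃ c : ℕ → ι, ∀ i, {n | n ∈ A i ∧ c n = i}.Infinite := by
  obtain ⟨e, he⟩ := exists_surjective_nat (ι × ℕ)
  obtain ⟨a, ha, ha_mem⟩ := exists_strictMono_forall_mem fun k => hA (e k).1
  have hc : ∀ k, (e (Function.invFun a (a k))).1 = (e k).1 := fun k => by
    rw [Function.leftInverse_invFun ha.injective k]
  refine ⟨fun n => (e (Function.invFun a n)).1, fun i => ?_⟩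
  have hei : ∀ m, (e (Function.surjInv he (i, m))).1 = i := fun m => by
    rw [Function.surjInv_eq he]
  refine Set.infinite_of_injective_forall_mem (f := fun m => a (Function.surjInv he (i, m)))
    (ha.injective.comp ((Function.injective_surjInv he).comp (Prod.mk_right_injective i)))
    fun m => ⟨by simpa only [hei m] using ha_mem (Function.surjInv he (i, m)),
      (hc _).trans (hei m)⟩

namespace Polynomial

theorem exists_natAbs_eval_ne {h : ℤ[X]} (hh : 0 < h.natDegree) (c : ℤ) :
    ∃ x : ℤ, (h.eval x).natAbs ≠ c.natAbs := by
  by_contra! hc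
  have hsq : h ^ 2 = C (c ^ 2) := eq_of_infinite_eval_eq _ _ <| by
    simpa [Int.natAbs_eq_iff_sq_eq.mp (hc _)] using Set.infinite_univ
  have := congrArg natDegree hsq
  rw [natDegree_pow, natDegree_C] at this
  omega

/-- With `c = g(0)` and `M` the product of the finitely many primes, `g(cMx) = c(1 + Mxw)` where
`1 + Mxw` is coprime to `M`; an `x` with `|g(cMx)| ≠ |c|` then produces a new prime. -/
theorem infinite_setOf_prime_dvd_eval {g : ℤ[X]} (hg : 0 < g.natDegree) :
    {p : ℕ | p.Prime ∧ ∃ z : ℤ, (p : ℤ) ∣ g.eval z}.Infinite := by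
  obtain ⟨c, hc_def⟩ : ∃ c, g.eval 0 = c := ⟨_, rfl⟩
  by_cases hc : c = 0
  · refine Nat.infinite_setOfPred_prime.mono fun p hp => ⟨hp, 0, ?_⟩
    rw [hc_def, hc]
    exact dvd_zero _
  intro hfin
  set M : ℤ := ∏ p ∈ hfin.toFinset, (p : ℤ)
  have hM : M ≠ 0 := Finset.prod_ne_zero_iff.mpr fun p hp => by
    exact_mod_cast (hfin.mem_toFinset.mp hp).1.ne_zero
  have hdeg : 0 < (g.comp (C (c * M) * X)).natDegree := by
    rwa [natDegree_comp, natDegree_C_mul_X _ (mul_ne_zero hc hM), mul_one]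
  obtain ⟨x, hx⟩ := exists_natAbs_eval_ne hdeg c
  obtain ⟨w, hw⟩ := sub_dvd_eval_sub (c * M * x) 0 g
  have hval : g.eval (c * M * x) = c * (1 + M * x * w) := by
    rw [sub_zero, hc_def] at hw
    linear_combination hw
  obtain ⟨q, hq, hqu⟩ := Nat.exists_prime_and_dvd (n := (1 + M * x * w).natAbs) fun h1 => hx <| by
    rw [eval_comp, eval_mul, eval_C, eval_X, hval, Int.natAbs_mul, h1, mul_one]
  rw [← Int.natCast_dvd] at hqu
  have hqM : (q : ℤ) ∣ M :=
    Finset.dvd_prod_of_mem _ (hfin.mem_toFinset.mpr ⟨hq, c * M * x, hval ▸ hqu.mul_left c⟩)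
  have hq1 : (q : ℤ) ∣ 1 := by
    simpa using dvd_sub hqu ((hqM.mul_right x).mul_right w)
  exact hq.one_lt.ne' (by exact_mod_cast Int.eq_one_of_dvd_one (by positivity) hq1)

theorem infinite_setOf_prime_padicNorm_eval_lt_one {f : ℚ[X]} (hf : 0 < f.natDegree) :
    {p : ℕ | p.Prime ∧ ∃ z : ℤ, padicNorm p (f.eval (z : ℚ)) < 1}.Infinite := by
  obtain ⟨N, hN, hg⟩ := IsLocalization.integerNormalization_spec (nonZeroDivisors ℤ) f
  set g := IsLocalization.integerNormalization (nonZeroDivisors ℤ) f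
  have hN0 : N ≠ 0 := nonZeroDivisors.ne_zero hN
  have hgdeg : g.natDegree = f.natDegree := by
    rw [← natDegree_map_eq_of_injective (algebraMap ℤ ℚ).injective_int, hg, zsmul_eq_mul,
      ← C_eq_intCast, natDegree_C_mul (by exact_mod_cast hN0)]
  have heval : ∀ z : ℤ, ((g.eval z : ℤ) : ℚ) = N * f.eval (z : ℚ) := fun z => by
    simpa using congrArg (eval (z : ℚ)) hg
  refine ((infinite_setOf_prime_dvd_eval (hgdeg ▸ hf)).sdiff (Set.finite_le_nat N.natAbs)).mono ?_
  rintro p ⟨⟨hp, z, hz⟩, hpN⟩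
  have : Fact p.Prime := ⟨hp⟩
  have hpN' : ¬(p : ℤ) ∣ N := fun h =>
    hpN (Nat.le_of_dvd (Int.natAbs_pos.mpr hN0) (Int.natCast_dvd.mp h))
  refine ⟨hp, z, ?_⟩
  have hlt := (padicNorm.int_lt_one_iff _).mpr hz
  rwa [heval, padicNorm.mul, (padicNorm.int_eq_one_iff N).mpr hpN', one_mul] at hlt

end Polynomial

theorem exists_forall_infinite_setOf_padicNorm_eval_lt_one :
    ∃ z : ℕ → ℤ, ∀ f : ℚ[X], 0 < f.natDegree →
      {p : ℕ | p.Prime ∧ padicNorm p (f.eval (z p : ℚ)) < 1}.Infinite := by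
  have : Nonempty {f : ℚ[X] // 0 < f.natDegree} := ⟨⟨X, by simp⟩⟩
  obtain ⟨c, hc⟩ := exists_forall_infinite_setOf_mem_and_eq
    fun f : {f : ℚ[X] // 0 < f.natDegree} => infinite_setOf_prime_padicNorm_eval_lt_one f.2
  refine ⟨fun p => Classical.epsilon fun z : ℤ => padicNorm p ((c p).1.eval (z : ℚ)) < 1,
    fun f hf => (hc ⟨f, hf⟩).mono ?_⟩
  rintro p ⟨⟨hp, hz⟩, hcp⟩
  refine ⟨hp, ?_⟩
  simp only [hcp]
  exact Classical.epsilon_spec hz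

theorem Rat.den_eq_one_of_forall_norm_padic_le_one {r : ℚ}
    (h : ∀ (p : ℕ) [Fact p.Prime], ‖(r : ℚ_[p])‖ ≤ 1) : r.den = 1 := by
  refine Nat.eq_one_iff_not_exists_prime_dvd.mpr fun p hp hdvd => ?_
  have : Fact p.Prime := ⟨hp⟩
  have hcop : p.Coprime r.den :=
    PadicInt.norm_natCast_eq_one_iff.mp (PadicInt.isUnit_iff.mp (PadicInt.isUnit_den r (h p)))
  exact (Nat.Prime.coprime_iff_not_dvd hp).mp hcop hdvd

theorem Padic.norm_aeval_intCast_eq_padicNorm {p : ℕ} [Fact p.Prime] (f : ℚ[X]) (z : ℤ) :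
    ‖aeval (z : ℚ_[p]) f‖ = padicNorm p (f.eval (z : ℚ)) := by
  have hz : (z : ℚ_[p]) = algebraMap ℚ ℚ_[p] z := by simp
  rw [← Padic.eq_padicNorm, hz, aeval_algebraMap_apply, coe_aeval_eq_eval, eq_ratCast]

namespace Rtau

variable {τ : (p : ℕ) → [Fact p.Prime] → ℤ_[p]}

theorem mem_iff {f : ℚ[X]} :
    f ∈ Rtau τ ↔ ∀ (p : ℕ) [Fact p.Prime], ‖aeval (τ p : ℚ_[p]) f‖ ≤ 1 := by
  simp only [Rtau, Subring.mem_iInf, Subring.mem_comap, RingHom.mem_range]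
  exact forall₂_congr fun p _ => ⟨fun ⟨y, hy⟩ => hy ▸ y.2, fun h => ⟨⟨_, h⟩, rfl⟩⟩

theorem norm_aeval_le_one (f : Rtau τ) (p : ℕ) [Fact p.Prime] :
    ‖aeval (τ p : ℚ_[p]) (f : ℚ[X])‖ ≤ 1 :=
  mem_iff.mp f.2 p

theorem exists_eq_intCast_of_natDegree_eq_zero {f : Rtau τ} (hf : (f : ℚ[X]).natDegree = 0) :
    ∃ m : ℤ, f = m := by
  obtain ⟨r, hr⟩ := natDegree_eq_zero.mp hf
  have hden : r.den = 1 := Rat.den_eq_one_of_forall_norm_padic_le_one fun p _ => by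
    simpa [← hr] using norm_aeval_le_one f p
  refine ⟨r.num, Subtype.ext ?_⟩
  rw [← hr, ← Rat.coe_int_num_of_den_eq_one hden]
  simp

theorem isUnit_iff {u : Rtau τ} : IsUnit u ↔ u = 1 ∨ u = -1 := by
  refine ⟨fun hu => ?_, by rintro (rfl | rfl) <;> simp⟩
  obtain ⟨v, huv⟩ := hu.exists_right_inv
  have huv' : (u : ℚ[X]) * v = 1 := congrArg Subtype.val huv
  obtain ⟨m, rfl⟩ := exists_eq_intCast_of_natDegree_eq_zero
    (natDegree_eq_zero_of_isUnit (IsUnit.of_mul_eq_one _ huv'))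
  obtain ⟨n, rfl⟩ := exists_eq_intCast_of_natDegree_eq_zero
    (natDegree_eq_zero_of_isUnit (IsUnit.of_mul_eq_one_right _ huv'))
  have hmn : m * n = 1 := by exact_mod_cast huv
  rcases Int.eq_one_or_neg_one_of_mul_eq_one hmn with rfl | rfl <;> simp

theorem natCast_dvd_iff {q : ℕ} [hq : Fact q.Prime] {f : Rtau τ} :
    (q : Rtau τ) ∣ f ↔ ‖aeval (τ q : ℚ_[q]) (f : ℚ[X])‖ < 1 := by
  have hq1 : (1 : ℝ) < q := by exact_mod_cast hq.out.one_lt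
  constructor
  · rintro ⟨c, rfl⟩
    calc ‖aeval (τ q : ℚ_[q]) ((q * c : Rtau τ) : ℚ[X])‖
        = (q : ℝ)⁻¹ * ‖aeval (τ q : ℚ_[q]) (c : ℚ[X])‖ := by simp [Padic.norm_p]
      _ ≤ (q : ℝ)⁻¹ := mul_le_of_le_one_right (by positivity) (norm_aeval_le_one c q)
      _ < 1 := inv_lt_one_of_one_lt₀ hq1
  · intro h
    have hle : ‖aeval (τ q : ℚ_[q]) (f : ℚ[X])‖ ≤ (q : ℝ)⁻¹ := by
      simpa using (Padic.norm_le_pow_iff_norm_lt_pow_add_one _ (-1)).mpr (by simpa using h)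
    have hmem : C (q : ℚ)⁻¹ * (f : ℚ[X]) ∈ Rtau τ := mem_iff.mpr fun p _ => by
      rw [map_mul, aeval_C, norm_mul, map_inv₀, norm_inv, map_natCast]
      by_cases hpq : p = q
      · subst hpq
        rw [Padic.norm_p, inv_inv]
        calc (p : ℝ) * _ ≤ p * (p : ℝ)⁻¹ := by gcongr
          _ = 1 := mul_inv_cancel₀ (by positivity)
      · rw [Padic.norm_natCast_eq_one_iff.mpr ((Nat.coprime_primes Fact.out hq.out).mpr hpq),
          inv_one, one_mul]
        exact norm_aeval_le_one f p
    refine ⟨⟨_, hmem⟩, Subtype.ext ?_⟩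
    rw [Subring.coe_mul, Subring.coe_natCast, ← C_eq_natCast, ← mul_assoc, ← C_mul,
      mul_inv_cancel₀ (by exact_mod_cast hq.out.ne_zero), C_1, one_mul]

theorem prime_natCast (q : ℕ) [hq : Fact q.Prime] : Prime (q : Rtau τ) := by
  refine ⟨by exact_mod_cast hq.out.ne_zero, fun hunit => ?_, fun a b hab => ?_⟩
  · simpa using natCast_dvd_iff.mp (isUnit_iff_dvd_one.mp hunit)
  · simp only [natCast_dvd_iff] at hab ⊢
    by_contra! h
    rw [Subring.coe_mul, map_mul, norm_mul] at hab
    exact (one_le_mul_of_one_le_of_one_le h.1 h.2).not_gt hab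

theorem associated_natCast_iff {q : ℕ} {f : Rtau τ} :
    Associated (q : Rtau τ) f ↔ f = q ∨ f = -q := by
  constructor
  · rintro ⟨u, rfl⟩
    rcases isUnit_iff.mp u.isUnit with hu | hu <;> simp [hu]
  · rintro (rfl | rfl)
    exacts [Associated.refl _, (Associated.refl _).neg_right]

theorem exists_prime_natCast_dvd_of_natDegree_eq_zero {f : Rtau τ}
    (hf : (f : ℚ[X]).natDegree = 0) (hu : ¬IsUnit f) : ∃ q : ℕ, q.Prime ∧ (q : Rtau τ) ∣ f := by
  obtain ⟨m, rfl⟩ := exists_eq_intCast_of_natDegree_eq_zero hf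
  have hm : m.natAbs ≠ 1 := fun h => hu <| by
    rcases Int.natAbs_eq_iff.mp h with rfl | rfl <;> simp
  obtain ⟨q, hq, hqm⟩ := Nat.exists_prime_and_dvd hm
  exact ⟨q, hq, by exact_mod_cast Int.cast_dvd_cast _ _ (Int.natCast_dvd.mpr hqm)⟩

theorem prime_iff (hτ : ∀ f : Rtau τ, 0 < (f : ℚ[X]).natDegree →
      ∃ q : ℕ, q.Prime ∧ (q : Rtau τ) ∣ f) {f : Rtau τ} :
    Prime f ↔ ∃ q : ℕ, q.Prime ∧ (f = q ∨ f = -q) := by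
  constructor
  · intro hf
    obtain ⟨q, hq, hqf⟩ : ∃ q : ℕ, q.Prime ∧ (q : Rtau τ) ∣ f := by
      rcases Nat.eq_zero_or_pos (f : ℚ[X]).natDegree with h0 | hpos
      exacts [exists_prime_natCast_dvd_of_natDegree_eq_zero h0 hf.not_isUnit, hτ f hpos]
    have : Fact q.Prime := ⟨hq⟩
    exact ⟨q, hq, associated_natCast_iff.mp
      ((prime_natCast q).irreducible.associated_of_dvd hf.irreducible hqf)⟩
  · rintro ⟨q, hq, hf⟩
    have : Fact q.Prime := ⟨hq⟩
    exact (associated_natCast_iff.mpr hf).prime (prime_natCast q)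

end Rtau

theorem exists_tau_only_standard_primes :
    ∃ τ : (p : ℕ) → [Fact p.Prime] → ℤ_[p],
      (∀ (p : ℕ) [Fact p.Prime], ∃ z : ℤ, τ p = (z : ℤ_[p])) ∧
      (∀ f : Rtau τ, 0 < (f : Polynomial ℚ).natDegree →
        {q : ℕ | q.Prime ∧ (q : Rtau τ) ∣ f}.Infinite) ∧
      (∀ f : Rtau τ, Prime f ↔ ∃ q : ℕ, q.Prime ∧
        ((f : Polynomial ℚ) = C (q : ℚ) ∨ (f : Polynomial ℚ) = -C (q : ℚ))) := by
  obtain ⟨z, hz⟩ := exists_forall_infinite_setOf_padicNorm_eval_lt_one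
  let τ : (p : ℕ) → [Fact p.Prime] → ℤ_[p] := fun p _ => (z p : ℤ_[p])
  have hdvd : ∀ f : Rtau τ, 0 < (f : ℚ[X]).natDegree →
      {q : ℕ | q.Prime ∧ (q : Rtau τ) ∣ f}.Infinite := by
    refine fun f hf => (hz f hf).mono ?_
    rintro q ⟨hq, hlt⟩
    have : Fact q.Prime := ⟨hq⟩
    refine ⟨hq, Rtau.natCast_dvd_iff.mpr ?_⟩
    simpa [τ, Padic.norm_aeval_intCast_eq_padicNorm] using (Rat.cast_lt (K := ℝ)).mpr hlt
  refine ⟨τ, fun p _ => ⟨z p, rfl⟩, hdvd, fun f => ?_⟩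
  rw [Rtau.prime_iff fun f hf => (hdvd f hf).nonempty]
  simp [Subtype.ext_iff]
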